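/- arXiv:1904.05352 — 2 statements merged into one kernel-verified Lean document; each statement's English description precedes it below -/
import Mathlib

section
/- Let A be a self-adjoint, positive, compact operator on a separable Hilbert space H with ker(A) = {0}. Then for every x in H, the limit as γ → 0⁺ of ⟨x, (A+γI)^{-1} x⟩ equals ‖A^{-1/2}x‖² if x ∈ Im(A^{1/2}), and equals +∞ (the quantity ⟨x,(A+γI)^{-1}x⟩ tends to infinity) if x ∉ Im(A^{1/2}). -/
open Filter Topology Set
open scoped RealInnerProductSpace

set_option maxHeartbeats 1600000 in
/-- For a self-adjoint, positive, compact, injective operator `A` on a real separable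
Hilbert space, with positive square root `sqrtA` and `Rinv γ = (A+γI)⁻¹`:
`⟨x,(A+γI)⁻¹x⟩ → ‖A^{-1/2}x‖²` as `γ → 0⁺` when `x ∈ Im(A^{1/2})` (where `x = A^{1/2}y`
gives `‖A^{-1/2}x‖ = ‖y‖`), and `⟨x,(A+γI)⁻¹x⟩ → ∞` when `x ∉ Im(A^{1/2})`. -/
theorem stmt1
    {H : Type*} [NormedAddCommGroup H] [InnerProductSpace ℝ H] [CompleteSpace H]
    [TopologicalSpace.SeparableSpace H]
    (A sqrtA : H →L[ℝ] H)
    (hA_compact : IsCompactOperator (⇑A))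
    (hA_pos : A.IsPositive)
    (hA_inj : Function.Injective (⇑A))
    (hsqrt_pos : sqrtA.IsPositive)
    (hsqrt : sqrtA * sqrtA = A)
    (Rinv : ℝ → (H →L[ℝ] H))
    (hRinv : ∀ γ : ℝ, 0 < γ →
      (A + γ • (1 : H →L[ℝ] H)) * Rinv γ = 1 ∧
      Rinv γ * (A + γ • (1 : H →L[ℝ] H)) = 1)
    (x : H) :
    (∀ y : H, sqrtA y = x →
      Tendsto (fun γ : ℝ => ⟪x, Rinv γ x⟫) (𝓝[>] 0) (𝓝 (‖y‖ ^ 2))) ∧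
    (x ∉ Set.range (⇑sqrtA) →
      Tendsto (fun γ : ℝ => ⟪x, Rinv γ x⟫) (𝓝[>] 0) atTop) := by
  have hAsa : ∀ u v : H, ⟪A u, v⟫ = ⟪u, A v⟫ := fun u v => hA_pos.1 u v
  have hBsa : ∀ u v : H, ⟪sqrtA u, v⟫ = ⟪u, sqrtA v⟫ := fun u v => hsqrt_pos.1 u v
  have hBB : ∀ u : H, sqrtA (sqrtA u) = A u := fun u => by rw [← hsqrt]; rfl
  have hAtoB : ∀ u v : H, ⟪u, A v⟫ = ⟪sqrtA u, sqrtA v⟫ := fun u v => by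
    rw [← hBB v, ← hBsa u (sqrtA v)]
  have hAB : ∀ u : H, A (sqrtA u) = sqrtA (A u) := fun u =>
    (hBB (sqrtA u)).symm.trans (congrArg sqrtA (hBB u))
  -- pointwise inverse identities
  have hR1 : ∀ γ : ℝ, 0 < γ → ∀ u : H, A (Rinv γ u) + γ • Rinv γ u = u := by
    intro γ hγ u
    have := congrArg (fun T : H →L[ℝ] H => T u) (hRinv γ hγ).1
    simpa [ContinuousLinearMap.mul_apply, ContinuousLinearMap.add_apply,
      ContinuousLinearMap.smul_apply, ContinuousLinearMap.one_apply] using this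
  have hR2 : ∀ γ : ℝ, 0 < γ → ∀ u : H, Rinv γ (A u + γ • u) = u := by
    intro γ hγ u
    have := congrArg (fun T : H →L[ℝ] H => T u) (hRinv γ hγ).2
    simpa [ContinuousLinearMap.mul_apply, ContinuousLinearMap.add_apply,
      ContinuousLinearMap.smul_apply, ContinuousLinearMap.one_apply] using this
  have hAu : ∀ γ : ℝ, 0 < γ → ∀ u : H, A (Rinv γ u) = u - γ • Rinv γ u := by
    intro γ hγ u
    have := hR1 γ hγ u
    linear_combination (norm := abel) this
  -- sqrtA commutes with Rinv γ
  have hBR : ∀ γ : ℝ, 0 < γ → ∀ u : H, sqrtA (Rinv γ u) = Rinv γ (sqrtA u) := by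
    intro γ hγ u
    calc sqrtA (Rinv γ u)
        = Rinv γ (A (sqrtA (Rinv γ u)) + γ • sqrtA (Rinv γ u)) := (hR2 γ hγ _).symm
      _ = Rinv γ (sqrtA (A (Rinv γ u) + γ • Rinv γ u)) := by
          rw [hAB, ← map_smul sqrtA, ← map_add sqrtA]
      _ = Rinv γ (sqrtA u) := by rw [hR1 γ hγ u]
  have hRA : ∀ γ : ℝ, 0 < γ → ∀ u : H, Rinv γ (A u) = A (Rinv γ u) := by
    intro γ hγ u
    calc Rinv γ (A u) = Rinv γ (sqrtA (sqrtA u)) := by rw [hBB]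
      _ = sqrtA (sqrtA (Rinv γ u)) := by rw [← hBR γ hγ, ← hBR γ hγ]
      _ = A (Rinv γ u) := hBB _
  -- Rinv γ is self-adjoint
  have hRsa : ∀ γ : ℝ, 0 < γ → ∀ u v : H, ⟪Rinv γ u, v⟫ = ⟪u, Rinv γ v⟫ := by
    intro γ hγ u v
    calc ⟪Rinv γ u, v⟫ = ⟪Rinv γ u, A (Rinv γ v) + γ • Rinv γ v⟫ := by rw [hR1 γ hγ v]
      _ = ⟪A (Rinv γ u) + γ • Rinv γ u, Rinv γ v⟫ := by
          rw [inner_add_right, inner_add_left, real_inner_smul_right, real_inner_smul_left,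
            ← hAsa]
      _ = ⟪u, Rinv γ v⟫ := by rw [hR1 γ hγ u]
  -- the fundamental identity for ⟪u, Rinv γ u⟫
  have hfval : ∀ γ : ℝ, 0 < γ → ∀ u : H,
      ⟪u, Rinv γ u⟫ = ‖sqrtA (Rinv γ u)‖ ^ 2 + γ * ‖Rinv γ u‖ ^ 2 := by
    intro γ hγ u
    calc ⟪u, Rinv γ u⟫ = ⟪A (Rinv γ u) + γ • Rinv γ u, Rinv γ u⟫ := by rw [hR1 γ hγ u]
      _ = ⟪Rinv γ u, A (Rinv γ u)⟫ + γ * ⟪Rinv γ u, Rinv γ u⟫ := by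
          rw [inner_add_left, real_inner_smul_left, real_inner_comm (A (Rinv γ u))]
      _ = ‖sqrtA (Rinv γ u)‖ ^ 2 + γ * ‖Rinv γ u‖ ^ 2 := by
          rw [hAtoB, real_inner_self_eq_norm_sq, real_inner_self_eq_norm_sq]
  have hRpos : ∀ γ : ℝ, 0 < γ → ∀ u : H, 0 ≤ ⟪u, Rinv γ u⟫ := by
    intro γ hγ u
    rw [hfval γ hγ u]
    positivity
  -- the uniform bound γ‖Rγ u‖ ≤ ‖u‖
  have hnb : ∀ γ : ℝ, 0 < γ → ∀ u : H, γ * ‖Rinv γ u‖ ≤ ‖u‖ := by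
    intro γ hγ u
    have h1 : γ * ‖Rinv γ u‖ ^ 2 ≤ ⟪u, Rinv γ u⟫ := by
      rw [hfval γ hγ u]; nlinarith [sq_nonneg ‖sqrtA (Rinv γ u)‖]
    have h2 : ⟪u, Rinv γ u⟫ ≤ ‖u‖ * ‖Rinv γ u‖ := real_inner_le_norm u _
    rcases eq_or_lt_of_le (norm_nonneg (Rinv γ u)) with h | h
    · rw [← h]; simpa using norm_nonneg u
    · nlinarith
  -- dense range of A
  have hdense : DenseRange ⇑A := by
    have horth : (LinearMap.range (A : H →ₗ[ℝ] H))ᗮ = ⊥ := by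
      rw [Submodule.eq_bot_iff]
      intro v hv
      have hv' : ∀ u : H, ⟪u, A v⟫ = 0 := by
        intro u
        rw [← hAsa]
        exact real_inner_comm (A u) v ▸ hv (A u) (LinearMap.mem_range_self _ u)
      have hAv : A v = 0 := by
        have := hv' (A v)
        rwa [inner_self_eq_zero] at this
      exact hA_inj (by rw [hAv, map_zero])
    have htop : (LinearMap.range (A : H →ₗ[ℝ] H)).topologicalClosure = ⊤ :=
      Submodule.topologicalClosure_eq_top_iff.mpr horth
    have := Submodule.dense_iff_topologicalClosure_eq_top.mpr htop
    simpa [DenseRange, LinearMap.coe_range] using this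
  -- γ • Rinv γ u → 0
  have hsmallR : ∀ u : H, Tendsto (fun γ : ℝ => γ • Rinv γ u) (𝓝[>] 0) (𝓝 0) := by
    intro u
    rw [Metric.tendsto_nhdsWithin_nhds]
    intro ε hε
    obtain ⟨z, hz⟩ := hdense.exists_dist_lt u (half_pos hε)
    refine ⟨ε / (4 * (‖z‖ + 1)), by positivity, ?_⟩
    intro γ hγ hγd
    have hγ0 : (0:ℝ) < γ := hγ
    rw [dist_eq_norm, sub_zero]
    have hsplit : γ • Rinv γ u = γ • Rinv γ (u - A z) + γ • Rinv γ (A z) := by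
      rw [← smul_add, ← map_add, sub_add_cancel]
    have hb1 : ‖γ • Rinv γ (u - A z)‖ ≤ ‖u - A z‖ := by
      rw [norm_smul, Real.norm_eq_abs, abs_of_pos hγ0]
      exact hnb γ hγ0 _
    have hb2 : ‖γ • Rinv γ (A z)‖ ≤ 2 * γ * ‖z‖ := by
      have hz' : Rinv γ (A z) = z - γ • Rinv γ z := by
        have h := hR2 γ hγ0 z
        rw [map_add, map_smul] at h
        linear_combination (norm := abel) h
      rw [hz', smul_sub]
      refine (norm_sub_le _ _).trans ?_
      have e1 : ‖γ • z‖ = γ * ‖z‖ := by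
        rw [norm_smul, Real.norm_eq_abs, abs_of_pos hγ0]
      have e2 : ‖γ • γ • Rinv γ z‖ ≤ γ * ‖z‖ := by
        rw [norm_smul, Real.norm_eq_abs, abs_of_pos hγ0, norm_smul, Real.norm_eq_abs,
          abs_of_pos hγ0]
        exact mul_le_mul_of_nonneg_left (hnb γ hγ0 z) hγ0.le
      linarith
    have hud : ‖u - A z‖ < ε / 2 := by
      rw [dist_eq_norm] at hz
      exact hz
    have hγs : 2 * γ * ‖z‖ < ε / 2 := by
      rw [Real.dist_eq, sub_zero, abs_of_pos hγ0] at hγd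
      have hz1 : ‖z‖ + 1 > 0 := by positivity
      calc 2 * γ * ‖z‖ ≤ 2 * γ * (‖z‖ + 1) := by nlinarith
        _ < 2 * (ε / (4 * (‖z‖ + 1))) * (‖z‖ + 1) := by
            apply mul_lt_mul_of_pos_right _ hz1
            linarith
        _ = ε / 2 := by field_simp; ring
    calc ‖γ • Rinv γ u‖ ≤ ‖γ • Rinv γ (u - A z)‖ + ‖γ • Rinv γ (A z)‖ := by
          rw [hsplit]; exact norm_add_le _ _
      _ < ε := by linarith
  -- resolvent identity
  have hres : ∀ a b : ℝ, 0 < a → 0 < b → ∀ u : H,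
      Rinv a u = Rinv b u + (b - a) • Rinv a (Rinv b u) := by
    intro a b ha hb u
    have key : A (Rinv b u) + a • Rinv b u + (b - a) • Rinv b u = u := by
      have := hR1 b hb u
      linear_combination (norm := module) this
    calc Rinv a u = Rinv a (A (Rinv b u) + a • Rinv b u + (b - a) • Rinv b u) := by rw [key]
      _ = Rinv a (A (Rinv b u) + a • Rinv b u) + (b - a) • Rinv a (Rinv b u) := by
          rw [map_add, map_smul]
      _ = Rinv b u + (b - a) • Rinv a (Rinv b u) := by rw [hR2 a ha (Rinv b u)]
  -- cross positivity
  have hcross : ∀ a b : ℝ, 0 < a → 0 < b → ∀ u : H, 0 ≤ ⟪Rinv a u, Rinv b u⟫ := by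
    intro a b ha hb u
    set w := Rinv b u with hw
    have h1 : Rinv a u = A (Rinv a w) + b • Rinv a w := by
      calc Rinv a u = Rinv a (A w + b • w) := by
            rw [show A w + b • w = u from by rw [hw]; exact hR1 b hb u]
        _ = Rinv a (A w) + b • Rinv a w := by rw [map_add, map_smul]
        _ = A (Rinv a w) + b • Rinv a w := by rw [hRA a ha w]
    rw [h1, inner_add_left, real_inner_smul_left]
    have t1 : 0 ≤ ⟪A (Rinv a w), w⟫ := by
      rw [hAsa, hAtoB, hBR a ha w, real_inner_comm]
      exact hRpos a ha (sqrtA w)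
    have t2 : 0 ≤ ⟪Rinv a w, w⟫ := by
      rw [real_inner_comm]
      exact hRpos a ha w
    nlinarith
  -- difference formula for f
  have hdiff : ∀ a b : ℝ, 0 < a → 0 < b →
      ⟪x, Rinv a x⟫ = ⟪x, Rinv b x⟫ + (b - a) * ⟪Rinv a x, Rinv b x⟫ := by
    intro a b ha hb
    have h := hres a b ha hb x
    calc ⟪x, Rinv a x⟫ = ⟪x, Rinv b x + (b - a) • Rinv a (Rinv b x)⟫ := by rw [← h]
      _ = ⟪x, Rinv b x⟫ + (b - a) * ⟪x, Rinv a (Rinv b x)⟫ := by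
          rw [inner_add_right, real_inner_smul_right]
      _ = ⟪x, Rinv b x⟫ + (b - a) * ⟪Rinv a x, Rinv b x⟫ := by
          rw [hRsa a ha x (Rinv b x)]
  -- antitonicity
  have hanti : AntitoneOn (fun γ : ℝ => ⟪x, Rinv γ x⟫) (Ioi 0) := by
    intro a ha b hb hab
    have h := hdiff a b ha hb
    have hc := hcross a b ha hb x
    simp only
    nlinarith
  -- the key Cauchy estimate
  have hkey : ∀ a b : ℝ, 0 < a → a ≤ b / 2 →
      ‖sqrtA (Rinv a x) - sqrtA (Rinv b x)‖ ^ 2 ≤ 3 * (⟪x, Rinv a x⟫ - ⟪x, Rinv b x⟫) := by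
    intro a b ha hab
    have hb : 0 < b := by linarith
    set u₂ := Rinv a x with hu₂
    set u₁ := Rinv b x with hu₁
    have e2 : A u₂ = x - a • u₂ := hAu a ha x
    have e1 : A u₁ = x - b • u₁ := hAu b hb x
    have hx2 : ⟪u₂, x⟫ = ⟪x, Rinv a x⟫ := real_inner_comm _ _
    have hx1 : ⟪u₁, x⟫ = ⟪x, Rinv b x⟫ := real_inner_comm _ _
    have s22 : ⟪u₂, A u₂⟫ = ⟪x, Rinv a x⟫ - a * ‖u₂‖ ^ 2 := by
      rw [e2, inner_sub_right, real_inner_smul_right, hx2, real_inner_self_eq_norm_sq]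
    have s11 : ⟪u₁, A u₁⟫ = ⟪x, Rinv b x⟫ - b * ‖u₁‖ ^ 2 := by
      rw [e1, inner_sub_right, real_inner_smul_right, hx1, real_inner_self_eq_norm_sq]
    have s21 : ⟪u₂, A u₁⟫ = ⟪x, Rinv a x⟫ - b * ⟪u₂, u₁⟫ := by
      rw [e1, inner_sub_right, real_inner_smul_right, hx2]
    have s12 : ⟪u₁, A u₂⟫ = ⟪x, Rinv b x⟫ - a * ⟪u₂, u₁⟫ := by
      rw [e2, inner_sub_right, real_inner_smul_right, hx1, real_inner_comm u₁ u₂]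
    have expand : ‖sqrtA u₂ - sqrtA u₁‖ ^ 2
        = (a + b) * ⟪u₂, u₁⟫ - a * ‖u₂‖ ^ 2 - b * ‖u₁‖ ^ 2 := by
      calc ‖sqrtA u₂ - sqrtA u₁‖ ^ 2
          = ⟪sqrtA u₂ - sqrtA u₁, sqrtA u₂ - sqrtA u₁⟫ :=
            (real_inner_self_eq_norm_sq _).symm
        _ = ⟪sqrtA (u₂ - u₁), sqrtA (u₂ - u₁)⟫ := by rw [map_sub]
        _ = ⟪u₂ - u₁, A (u₂ - u₁)⟫ := (hAtoB _ _).symm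
        _ = ⟪u₂, A u₂⟫ - ⟪u₂, A u₁⟫ - (⟪u₁, A u₂⟫ - ⟪u₁, A u₁⟫) := by
            rw [map_sub, inner_sub_left, inner_sub_right, inner_sub_right]
        _ = (a + b) * ⟪u₂, u₁⟫ - a * ‖u₂‖ ^ 2 - b * ‖u₁‖ ^ 2 := by
            rw [s22, s11, s21, s12]; ring
    have hd : ⟪x, Rinv a x⟫ = ⟪x, Rinv b x⟫ + (b - a) * ⟪u₂, u₁⟫ := hdiff a b ha hb
    have hc : 0 ≤ ⟪u₂, u₁⟫ := hcross a b ha hb x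
    have hn2 : 0 ≤ a * ‖u₂‖ ^ 2 := by positivity
    have hn1 : 0 ≤ b * ‖u₁‖ ^ 2 := by positivity
    have hfac : (0:ℝ) ≤ (2 * b - 4 * a) * ⟪u₂, u₁⟫ :=
      mul_nonneg (by linarith) hc
    rw [expand]
    nlinarith
  constructor
  · -- part 1 : `x = sqrtA y`
    intro y hy
    have hcongr : ∀ γ ∈ Ioi (0:ℝ), ⟪x, Rinv γ x⟫ = ‖y‖ ^ 2 - ⟪y, γ • Rinv γ y⟫ := by
      intro γ hγ
      have hγ0 : (0:ℝ) < γ := hγ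
      calc ⟪x, Rinv γ x⟫ = ⟪sqrtA y, Rinv γ (sqrtA y)⟫ := by rw [hy]
        _ = ⟪y, sqrtA (Rinv γ (sqrtA y))⟫ := hBsa y _
        _ = ⟪y, Rinv γ (sqrtA (sqrtA y))⟫ := by rw [hBR γ hγ0]
        _ = ⟪y, Rinv γ (A y)⟫ := by rw [hBB]
        _ = ⟪y, y - γ • Rinv γ y⟫ := by
            have h := hR2 γ hγ0 y
            rw [map_add, map_smul] at h
            have : Rinv γ (A y) = y - γ • Rinv γ y := by
              linear_combination (norm := abel) h
            rw [this]
        _ = ‖y‖ ^ 2 - ⟪y, γ • Rinv γ y⟫ := by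
            rw [inner_sub_right, real_inner_self_eq_norm_sq]
    have hlim : Tendsto (fun γ : ℝ => ‖y‖ ^ 2 - ⟪y, γ • Rinv γ y⟫) (𝓝[>] 0)
        (𝓝 (‖y‖ ^ 2 - 0)) := by
      apply Tendsto.sub tendsto_const_nhds
      have : Tendsto (fun γ : ℝ => ⟪y, γ • Rinv γ y⟫) (𝓝[>] 0) (𝓝 ⟪y, (0:H)⟫) :=
        Tendsto.inner tendsto_const_nhds (hsmallR y)
      simpa using this
    rw [sub_zero] at hlim
    refine Tendsto.congr' ?_ hlim
    filter_upwards [self_mem_nhdsWithin] with γ hγ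
    exact (hcongr γ hγ).symm
  · -- part 2 : `x ∉ range sqrtA`
    intro hx
    by_contra hnot
    -- boundedness of f
    obtain ⟨b, hb⟩ : ∃ b : ℝ, ∃ᶠ γ in 𝓝[>] (0:ℝ), ⟪x, Rinv γ x⟫ < b := by
      rw [tendsto_atTop] at hnot
      push_neg at hnot
      obtain ⟨b, hb⟩ := hnot
      exact ⟨b, by simpa [not_le] using hb⟩
    have hub : ∀ γ ∈ Ioi (0:ℝ), ⟪x, Rinv γ x⟫ ≤ b := by
      intro γ hγ
      have hev : ∀ᶠ γ' in 𝓝[>] (0:ℝ), γ' ∈ Ioo 0 γ :=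
        Ioo_mem_nhdsGT_of_mem ⟨le_refl 0, hγ⟩
      obtain ⟨γ', hγ'b, hγ'mem⟩ := (hb.and_eventually hev).exists
      exact le_of_lt (lt_of_le_of_lt (hanti (mem_Ioi.2 hγ'mem.1) hγ hγ'mem.2.le) hγ'b)
    have hbdd : BddAbove ((fun γ : ℝ => ⟪x, Rinv γ x⟫) '' Ioi 0) := by
      refine ⟨b, ?_⟩
      rintro r ⟨γ, hγ, rfl⟩
      exact hub γ hγ
    set L : ℝ := sSup ((fun γ : ℝ => ⟪x, Rinv γ x⟫) '' Ioi 0) with hL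
    have hfL : Tendsto (fun γ : ℝ => ⟪x, Rinv γ x⟫) (𝓝[>] 0) (𝓝 L) :=
      hanti.tendsto_nhdsGT hbdd
    have hfleL : ∀ γ : ℝ, 0 < γ → ⟪x, Rinv γ x⟫ ≤ L := fun γ hγ =>
      le_csSup hbdd ⟨γ, hγ, rfl⟩
    -- the sequence
    set s : ℕ → ℝ := fun n => 1 / ((n : ℝ) + 1) with hs
    have hspos : ∀ n, 0 < s n := fun n => by positivity
    have hstend : Tendsto s atTop (𝓝[>] (0:ℝ)) := by
      rw [tendsto_nhdsWithin_iff]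
      exact ⟨tendsto_one_div_add_atTop_nhds_zero_nat, Eventually.of_forall fun n => hspos n⟩
    set v : ℕ → H := fun n => sqrtA (Rinv (s n) x) with hv
    have hcauchy : CauchySeq v := by
      rw [Metric.cauchySeq_iff]
      intro ε hε
      have hε12 : (0:ℝ) < ε ^ 2 / 12 := by positivity
      -- choose γ₁ with L - f γ₁ < ε²/12
      have hev : ∀ᶠ γ in 𝓝[>] (0:ℝ),
          dist (⟪x, Rinv γ x⟫) L < ε ^ 2 / 12 := (Metric.tendsto_nhds.mp hfL) _ hε12
      obtain ⟨γ₁, hγ₁d, hγ₁pos⟩ := (hev.and self_mem_nhdsWithin).exists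
      have hγ₁pos' : (0:ℝ) < γ₁ := hγ₁pos
      have hLf : L - ⟪x, Rinv γ₁ x⟫ < ε ^ 2 / 12 := by
        have := abs_lt.mp (by rwa [Real.dist_eq] at hγ₁d)
        linarith [this.1]
      obtain ⟨N, hN⟩ : ∃ N : ℕ, ∀ n ≥ N, s n ≤ γ₁ / 2 := by
        have : ∀ᶠ n in atTop, s n < γ₁ / 2 := by
          have := (Metric.tendsto_nhds.mp (tendsto_one_div_add_atTop_nhds_zero_nat (𝕜 := ℝ)))
            (γ₁ / 2) (by positivity)
          filter_upwards [this] with n hn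
          rw [Real.dist_eq, sub_zero, abs_of_pos (hspos n)] at hn
          exact hn
        obtain ⟨N, hN⟩ := eventually_atTop.mp this
        exact ⟨N, fun n hn => (hN n hn).le⟩
      refine ⟨N, fun m hm n hn => ?_⟩
      have hbound : ∀ k, k ≥ N → dist (v k) (sqrtA (Rinv γ₁ x)) < ε / 2 := by
        intro k hk
        have h1 : ‖sqrtA (Rinv (s k) x) - sqrtA (Rinv γ₁ x)‖ ^ 2
            ≤ 3 * (⟪x, Rinv (s k) x⟫ - ⟪x, Rinv γ₁ x⟫) :=
          hkey (s k) γ₁ (hspos k) (hN k hk)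
        have h2 : ⟪x, Rinv (s k) x⟫ ≤ L := hfleL _ (hspos k)
        have h3 : ‖sqrtA (Rinv (s k) x) - sqrtA (Rinv γ₁ x)‖ ^ 2 < (ε / 2) ^ 2 := by
          nlinarith
        rw [dist_eq_norm]
        have := lt_of_pow_lt_pow_left₀ 2 (by positivity : (0:ℝ) ≤ ε / 2) h3
        exact this
      calc dist (v m) (v n) ≤ dist (v m) (sqrtA (Rinv γ₁ x)) + dist (sqrtA (Rinv γ₁ x)) (v n) :=
            dist_triangle _ _ _
        _ < ε / 2 + ε / 2 := by
            rw [dist_comm (sqrtA (Rinv γ₁ x)) (v n)]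
            exact add_lt_add (hbound m hm) (hbound n hn)
        _ = ε := by ring
    obtain ⟨w, hw⟩ := cauchySeq_tendsto_of_complete hcauchy
    -- sqrtA w = x, contradiction
    have h1 : Tendsto (fun n => sqrtA (v n)) atTop (𝓝 (sqrtA w)) :=
      (sqrtA.continuous.tendsto w).comp hw
    have h2 : ∀ n, sqrtA (v n) = x - s n • Rinv (s n) x := by
      intro n
      calc sqrtA (v n) = A (Rinv (s n) x) := hBB _
        _ = x - s n • Rinv (s n) x := hAu (s n) (hspos n) x
    have h3 : Tendsto (fun n => x - s n • Rinv (s n) x) atTop (𝓝 (x - 0)) :=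
      Tendsto.sub tendsto_const_nhds ((hsmallR x).comp hstend)
    rw [sub_zero] at h3
    have h4 : Tendsto (fun n => sqrtA (v n)) atTop (𝓝 x) := by
      refine Tendsto.congr ?_ h3
      intro n
      exact (h2 n).symm
    have : sqrtA w = x := tendsto_nhds_unique h1 h4
    exact hx ⟨w, this⟩
end

section
/- Let A be a self-adjoint, positive, trace class operator on a separable Hilbert space H and let B be a bounded operator on H. Then lim_{γ→0⁺} ‖(A+γI)^{-1/2} A B A (A+γI)^{-1/2} − A^{1/2} B A^{1/2}‖_{HS} = 0; more precisely, this Hilbert-Schmidt norm is bounded above by √γ (‖A^{1/2}B‖_{HS} + ‖BA^{1/2}‖_{HS}). -/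
open Filter Topology ENNReal
open scoped RealInnerProductSpace NNReal

set_option linter.unusedSectionVars false

section Stmt8Helpers
variable {H : Type*} [NormedAddCommGroup H] [InnerProductSpace ℝ H] [CompleteSpace H]

lemma symm_apply {T : H →L[ℝ] H} (hT : IsSelfAdjoint T) (x y : H) :
    ⟪T x, y⟫ = ⟪x, T y⟫ :=
  (ContinuousLinearMap.isSelfAdjoint_iff_isSymmetric.mp hT) x y

lemma pos_inner {T : H →L[ℝ] H} (hT : T.IsPositive) (x : H) : 0 ≤ ⟪T x, x⟫ := hT.2 x

lemma cs_pos {P : H →L[ℝ] H} (hP : P.IsPositive) (u v : H) :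
    ⟪P u, v⟫ ^ 2 ≤ ⟪P u, u⟫ * ⟪P v, v⟫ := by
  have hsymm : ⟪P v, u⟫ = ⟪P u, v⟫ := by
    rw [symm_apply hP.isSelfAdjoint v u, real_inner_comm]
  have key : ∀ t : ℝ, 0 ≤ ⟪P v, v⟫ * (t * t) + (2 * ⟪P u, v⟫) * t + ⟪P u, u⟫ := by
    intro t
    have h0 := pos_inner hP (u + t • v)
    have expand : ⟪P (u + t • v), u + t • v⟫ =
        ⟪P v, v⟫ * (t * t) + (2 * ⟪P u, v⟫) * t + ⟪P u, u⟫ := by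
      rw [map_add, map_smul, inner_add_left, inner_add_right, inner_add_right,
        inner_smul_left, inner_smul_right, inner_smul_left, inner_smul_right]
      simp only [RCLike.star_def, starRingEnd_apply, star_trivial]
      rw [hsymm]; ring
    linarith [expand ▸ h0]
  have hd := discrim_le_zero key
  rw [discrim] at hd
  nlinarith [hd]

lemma norm_le_of_inner_le {T : H →L[ℝ] H} (hT : IsSelfAdjoint T) {c : ℝ} (hc : 0 ≤ c)
    (h : ∀ x, |⟪T x, x⟫| ≤ c * ‖x‖ ^ 2) : ‖T‖ ≤ c := by
  refine T.opNorm_le_bound hc (fun u => ?_)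
  rcases eq_or_ne (T u) 0 with h0 | h0
  · simp only [h0, norm_zero]
    positivity
  have key : ∀ w z : H, 4 * ⟪T w, z⟫ = ⟪T (w + z), w + z⟫ - ⟪T (w - z), w - z⟫ := by
    intro w z
    have h1 : ⟪T z, w⟫ = ⟪T w, z⟫ := by rw [symm_apply hT z w, real_inner_comm]
    rw [map_add, map_sub, inner_add_left, inner_add_right, inner_add_right,
      inner_sub_left, inner_sub_right, inner_sub_right, h1]
    ring
  set v := (‖u‖ / ‖T u‖) • T u with hv
  have hvnorm : ‖v‖ = ‖u‖ := by
    rw [hv, norm_smul, norm_div, Real.norm_eq_abs, abs_of_nonneg (norm_nonneg _),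
      Real.norm_eq_abs, abs_of_nonneg (norm_nonneg _), div_mul_cancel₀]
    exact norm_ne_zero_iff.mpr h0
  have hinner : ⟪T u, v⟫ = ‖u‖ * ‖T u‖ := by
    rw [hv, real_inner_smul_right, real_inner_self_eq_norm_sq]
    have : ‖T u‖ ≠ 0 := norm_ne_zero_iff.mpr h0
    field_simp
  have h4 : 4 * ⟪T u, v⟫ ≤ c * (‖u + v‖ ^ 2 + ‖u - v‖ ^ 2) := by
    rw [key u v]
    have := h (u + v)
    have := h (u - v)
    have : |⟪T (u + v), u + v⟫ - ⟪T (u - v), u - v⟫| ≤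
        c * ‖u + v‖ ^ 2 + c * ‖u - v‖ ^ 2 := by
      calc |⟪T (u + v), u + v⟫ - ⟪T (u - v), u - v⟫|
          ≤ |⟪T (u + v), u + v⟫| + |⟪T (u - v), u - v⟫| := abs_sub _ _
        _ ≤ c * ‖u + v‖ ^ 2 + c * ‖u - v‖ ^ 2 := add_le_add (h _) (h _)
    calc ⟪T (u + v), u + v⟫ - ⟪T (u - v), u - v⟫ ≤ |_| := le_abs_self _
      _ ≤ c * ‖u + v‖ ^ 2 + c * ‖u - v‖ ^ 2 := this
      _ = c * (‖u + v‖ ^ 2 + ‖u - v‖ ^ 2) := by ring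
  have hpar : ‖u + v‖ ^ 2 + ‖u - v‖ ^ 2 = 2 * (‖u‖ ^ 2 + ‖v‖ ^ 2) := by
    have := parallelogram_law_with_norm ℝ u v
    nlinarith [this]
  rw [hinner] at h4
  rw [hpar, hvnorm] at h4
  rcases eq_or_ne u 0 with hu | hu
  · simp [hu]
  have hun : 0 < ‖u‖ := norm_pos_iff.mpr hu
  nlinarith [h4]

lemma inner_le_norm_sq (T : H →L[ℝ] H) (x : H) : ⟪T x, x⟫ ≤ ‖T‖ * ‖x‖ ^ 2 := by
  calc ⟪T x, x⟫ ≤ ‖T x‖ * ‖x‖ := real_inner_le_norm _ _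
    _ ≤ ‖T‖ * ‖x‖ * ‖x‖ := mul_le_mul_of_nonneg_right (T.le_opNorm x) (norm_nonneg x)
    _ = ‖T‖ * ‖x‖ ^ 2 := by ring

lemma clm_smul_mul (r : ℝ) (f g : H →L[ℝ] H) : (r • f) * g = r • (f * g) := by
  ext x; rfl

lemma clm_mul_smul (r : ℝ) (f g : H →L[ℝ] H) : f * (r • g) = r • (f * g) := by
  ext x
  simp only [ContinuousLinearMap.mul_apply, ContinuousLinearMap.smul_apply, map_smul]

lemma conj_inner_nonneg {g E : H →L[ℝ] H} (hg : ∀ y, (0:ℝ) ≤ ⟪g y, y⟫)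
    (hE : IsSelfAdjoint E) (y : H) : (0:ℝ) ≤ ⟪(E * g * E) y, y⟫ := by
  have h1 : (E * g * E) y = E (g (E y)) := rfl
  rw [h1, symm_apply hE]
  exact hg _

/-- product of commuting positive operators is positive -/
lemma isPositive_mul_of_commute {P Q : H →L[ℝ] H} (hP : P.IsPositive) (hQ : Q.IsPositive)
    (hcomm : P * Q = Q * P) : (P * Q).IsPositive := by
  have hsa : IsSelfAdjoint (P * Q) := by
    show star (P * Q) = P * Q
    rw [star_mul, hQ.isSelfAdjoint.star_eq, hP.isSelfAdjoint.star_eq, ← hcomm]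
  refine ⟨ContinuousLinearMap.isSelfAdjoint_iff_isSymmetric.mp hsa, fun x => ?_⟩
  show (0:ℝ) ≤ ⟪(P * Q) x, x⟫
  set c : ℝ := ‖P‖ + 1 with hc
  have hcpos : (0:ℝ) < c := by positivity
  set f : ℕ → H →L[ℝ] H := fun n => Nat.rec (c⁻¹ • P) (fun _ g => g - g * g) n with hfdef
  have hf0 : f 0 = c⁻¹ • P := rfl
  have hfs : ∀ n, f (n + 1) = f n - f n * f n := fun n => rfl
  have inv : ∀ n, (f n).IsPositive ∧ (∀ y, ⟪f n y, y⟫ ≤ ‖y‖ ^ 2) ∧ f n * Q = Q * f n := by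
    intro n
    induction n with
    | zero =>
      refine ⟨⟨?_, fun y => ?_⟩, fun y => ?_, ?_⟩
      · refine ContinuousLinearMap.isSelfAdjoint_iff_isSymmetric.mp ?_
        show star (c⁻¹ • P) = c⁻¹ • P
        rw [star_smul, star_trivial, hP.isSelfAdjoint.star_eq]
      · show (0:ℝ) ≤ ⟪(c⁻¹ • P) y, y⟫
        rw [ContinuousLinearMap.smul_apply, real_inner_smul_left]
        exact mul_nonneg (by positivity) (pos_inner hP y)
      · rw [hf0, ContinuousLinearMap.smul_apply, real_inner_smul_left]
        have h1 : ⟪P y, y⟫ ≤ ‖P‖ * ‖y‖ ^ 2 := inner_le_norm_sq P y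
        have h3 : c⁻¹ * ⟪P y, y⟫ ≤ c⁻¹ * (‖P‖ * ‖y‖ ^ 2) :=
          mul_le_mul_of_nonneg_left h1 (by positivity)
        have h4 : c⁻¹ * ‖P‖ ≤ 1 := by
          rw [← div_eq_inv_mul]
          exact (div_le_one hcpos).mpr (by rw [hc]; linarith)
        nlinarith [sq_nonneg ‖y‖, norm_nonneg P]
      · rw [hf0, clm_smul_mul, clm_mul_smul, hcomm]
    | succ n ih =>
      obtain ⟨hpos, hle1, hcq⟩ := ih
      have hgsa := hpos.isSelfAdjoint
      have h1sa : IsSelfAdjoint ((1 : H →L[ℝ] H) - f n) := by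
        show star _ = _
        rw [star_sub, star_one, hgsa.star_eq]
      have h1g : ∀ y, (0:ℝ) ≤ ⟪((1 : H →L[ℝ] H) - f n) y, y⟫ := by
        intro y
        rw [ContinuousLinearMap.sub_apply, inner_sub_left, ContinuousLinearMap.one_apply,
          real_inner_self_eq_norm_sq]
        linarith [hle1 y]
      have hdecomp : f n - f n * f n =
          ((1 : H →L[ℝ] H) - f n) * f n * ((1 : H →L[ℝ] H) - f n)
            + f n * ((1 : H →L[ℝ] H) - f n) * f n := by noncomm_ring
      refine ⟨⟨?_, fun y => ?_⟩, fun y => ?_, ?_⟩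
      · refine ContinuousLinearMap.isSelfAdjoint_iff_isSymmetric.mp ?_
        show star (f (n+1)) = f (n+1)
        rw [hfs, star_sub, star_mul, hgsa.star_eq]
      · show (0:ℝ) ≤ ⟪(f (n+1)) y, y⟫
        rw [hfs, hdecomp, ContinuousLinearMap.add_apply, inner_add_left]
        have e1 := conj_inner_nonneg (fun z => pos_inner hpos z) h1sa y
        have e2 := conj_inner_nonneg h1g hgsa y
        linarith
      · rw [hfs]
        have h5 : ⟪(f n * f n) y, y⟫ = ‖f n y‖ ^ 2 := by
          have : (f n * f n) y = f n (f n y) := rfl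
          rw [this, symm_apply hgsa, real_inner_self_eq_norm_sq]
        rw [ContinuousLinearMap.sub_apply, inner_sub_left, h5]
        have := hle1 y
        nlinarith [sq_nonneg ‖f n y‖]
      · have e : f n * f n * Q = Q * (f n * f n) := by
          conv_lhs => rw [mul_assoc, hcq, ← mul_assoc, hcq, mul_assoc]
        rw [hfs, sub_mul, mul_sub, hcq, e]
  -- telescoping
  have tel : ∀ n, f 0 = f n + ∑ k ∈ Finset.range n, f k * f k := by
    intro n
    induction n with
    | zero => simp
    | succ n ih =>
      rw [Finset.sum_range_succ, ih, hfs]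
      abel
  have hsq : ∀ k (y : H), ⟪(f k * f k) y, y⟫ = ‖f k y‖ ^ 2 := by
    intro k y
    have : (f k * f k) y = f k (f k y) := rfl
    rw [this, symm_apply (inv k).1.isSelfAdjoint, real_inner_self_eq_norm_sq]
  have hsummable : Summable (fun k => ‖f k x‖ ^ 2) := by
    apply summable_of_sum_range_le (c := ⟪f 0 x, x⟫) (fun n => sq_nonneg _)
    intro n
    have h6 : ⟪f 0 x, x⟫ = ⟪f n x, x⟫ + ∑ k ∈ Finset.range n, ‖f k x‖ ^ 2 := by
      have h7 := congrArg (fun (T : H →L[ℝ] H) => ⟪T x, x⟫) (tel n)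
      simp only [ContinuousLinearMap.add_apply, inner_add_left,
        ContinuousLinearMap.sum_apply, sum_inner] at h7
      rw [h7]
      congr 1
      exact Finset.sum_congr rfl (fun k _ => hsq k x)
    have := pos_inner (inv n).1 x
    linarith
  have hnorm0 : Tendsto (fun k => ‖f k x‖) atTop (𝓝 0) := by
    have h8 := hsummable.tendsto_atTop_zero
    have h9 : Tendsto (fun k => Real.sqrt (‖f k x‖ ^ 2)) atTop (𝓝 (Real.sqrt 0)) :=
      (Real.continuous_sqrt.tendsto 0).comp h8
    simpa [Real.sqrt_sq, Real.sqrt_zero] using h9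
  -- lower bound
  have hlow : ∀ n, -(‖Q x‖ * ‖f n x‖) ≤ ⟪(f 0 * Q) x, x⟫ := by
    intro n
    have h10 : f 0 * Q = f n * Q + ∑ k ∈ Finset.range n, f k * f k * Q := by
      rw [tel n, add_mul, Finset.sum_mul]
    have h11 : ∀ k, (0:ℝ) ≤ ⟪(f k * f k * Q) x, x⟫ := by
      intro k
      have hq := (inv k).2.2
      have : f k * f k * Q = f k * Q * f k := by
        conv_lhs => rw [mul_assoc, hq, ← mul_assoc]
      rw [this]
      exact conj_inner_nonneg (fun z => pos_inner hQ z) (inv k).1.isSelfAdjoint x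
    have h12 : ⟪(f n * Q) x, x⟫ = ⟪Q x, f n x⟫ := by
      have : (f n * Q) x = f n (Q x) := rfl
      rw [this, symm_apply (inv n).1.isSelfAdjoint]
    have h13 : -(‖Q x‖ * ‖f n x‖) ≤ ⟪(f n * Q) x, x⟫ := by
      rw [h12]
      have := abs_real_inner_le_norm (Q x) (f n x)
      linarith [neg_abs_le (⟪Q x, f n x⟫ : ℝ)]
    have h14 : ⟪(f 0 * Q) x, x⟫ =
        ⟪(f n * Q) x, x⟫ + ∑ k ∈ Finset.range n, ⟪(f k * f k * Q) x, x⟫ := by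
      rw [h10]
      simp only [ContinuousLinearMap.add_apply, inner_add_left,
        ContinuousLinearMap.sum_apply, sum_inner]
    have h15 : (0:ℝ) ≤ ∑ k ∈ Finset.range n, ⟪(f k * f k * Q) x, x⟫ :=
      Finset.sum_nonneg (fun k _ => h11 k)
    linarith
  have hfin : (0:ℝ) ≤ ⟪(f 0 * Q) x, x⟫ := by
    have h16 : Tendsto (fun n => -(‖Q x‖ * ‖f n x‖)) atTop (𝓝 0) := by
      have := (hnorm0.const_mul (‖Q x‖)).neg
      simpa using this
    exact le_of_tendsto' h16 hlow
  have hPf : P * Q = c • (f 0 * Q) := by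
    rw [hf0, clm_smul_mul, smul_smul, mul_inv_cancel₀ hcpos.ne', one_smul]
  rw [hPf, ContinuousLinearMap.smul_apply, real_inner_smul_left]
  exact mul_nonneg hcpos.le hfin

lemma fac_sq_sub {p q : H →L[ℝ] H} (h : p * q = q * p) :
    p * p - q * q = (p - q) * (p + q) := by
  rw [sub_mul, mul_add, mul_add, h]
  abel

set_option maxHeartbeats 1000000 in
/-- any operator commuting with a positive `C` commutes with a positive square root of `C`,
assuming `C ≤ 1` in the form sense. -/
lemma commute_sqrt_aux {C V T : H →L[ℝ] H} (hC : C.IsPositive)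
    (hC1 : ∀ x, ⟪C x, x⟫ ≤ ‖x‖ ^ 2) (hV : V.IsPositive) (hVC : V * V = C)
    (hT : T * C = C * T) : T * V = V * T := by
  set a : H →L[ℝ] H := 1 - C with ha
  have hasa : IsSelfAdjoint a := by
    show star _ = _
    rw [ha, star_sub, star_one, hC.isSelfAdjoint.star_eq]
  have hanorm : ‖a‖ ≤ 1 := by
    apply norm_le_of_inner_le hasa zero_le_one
    intro x
    have h1 : ⟪a x, x⟫ = ‖x‖ ^ 2 - ⟪C x, x⟫ := by
      rw [ha, ContinuousLinearMap.sub_apply, inner_sub_left, ContinuousLinearMap.one_apply,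
        real_inner_self_eq_norm_sq]
    rw [h1, one_mul, abs_le]
    exact ⟨by nlinarith [hC1 x, sq_nonneg ‖x‖], by linarith [pos_inner hC x]⟩
  set s : ℕ → ℝ := fun n => Nat.rec 0 (fun _ t => (1 + t * t) / 2) n with hs
  have hs0 : s 0 = 0 := rfl
  have hss : ∀ n, s (n + 1) = (1 + s n * s n) / 2 := fun n => rfl
  have hs01 : ∀ n, 0 ≤ s n ∧ s n ≤ 1 := by
    intro n
    induction n with
    | zero => simp [hs0]
    | succ n ih => rw [hss]; constructor <;> nlinarith [ih.1, ih.2]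
  have hsmono : Monotone s := by
    apply monotone_nat_of_le_succ
    intro n
    rw [hss]
    nlinarith [(hs01 n).1, (hs01 n).2]
  set x : ℕ → H →L[ℝ] H := fun n => Nat.rec 0 (fun _ y => (2:ℝ)⁻¹ • (a + y * y)) n with hx
  have hx0 : x 0 = 0 := rfl
  have hxs : ∀ n, x (n + 1) = (2:ℝ)⁻¹ • (a + x n * x n) := fun n => rfl
  have hcommx : ∀ D : H →L[ℝ] H, D * a = a * D → ∀ n, D * x n = x n * D := by
    intro D hD n
    induction n with
    | zero => simp [hx0]
    | succ n ih =>
      rw [hxs, clm_mul_smul, clm_smul_mul, mul_add, add_mul, hD, ← mul_assoc, ih, mul_assoc,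
        ih, ← mul_assoc]
  have hxa : ∀ n, a * x n = x n * a := fun n => hcommx a rfl n
  have hxx : ∀ m n, x m * x n = x n * x m := fun m n => hcommx (x m) (hxa m).symm n
  have hxsa : ∀ n, IsSelfAdjoint (x n) := by
    intro n
    induction n with
    | zero => rw [hx0]; exact IsSelfAdjoint.zero _
    | succ n ih =>
      show star _ = _
      rw [hxs, star_smul, star_trivial, star_add, star_mul, ih.star_eq, hasa.star_eq]
  have hxnorm : ∀ n, ‖x n‖ ≤ s n := by
    intro n
    induction n with
    | zero => simp [hx0, hs0]
    | succ n ih =>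
      rw [hxs, hss]
      have e1 : ‖(2:ℝ)⁻¹ • (a + x n * x n)‖ = 2⁻¹ * ‖a + x n * x n‖ := by
        rw [norm_smul ((2:ℝ)⁻¹) (a + x n * x n)]; norm_num
      have e2 : ‖a + x n * x n‖ ≤ ‖a‖ + ‖x n‖ * ‖x n‖ :=
        (norm_add_le _ _).trans (by linarith [norm_mul_le (x n) (x n)])
      rw [e1]
      nlinarith [norm_nonneg (x n), (hs01 n).1, hanorm, ih, norm_nonneg a]
  have hdiff : ∀ k n, ‖x (n + k) - x n‖ ≤ s (n + k) - s n := by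
    intro k n
    induction n with
    | zero => simpa [hx0, hs0] using hxnorm k
    | succ n ih =>
      have hidx : n + 1 + k = (n + k) + 1 := by omega
      rw [hidx, hxs, hxs]
      have e3 : (2:ℝ)⁻¹ • (a + x (n + k) * x (n + k)) - (2:ℝ)⁻¹ • (a + x n * x n)
          = (2:ℝ)⁻¹ • ((x (n + k) - x n) * (x (n + k) + x n)) := by
        rw [← fac_sq_sub (hxx (n + k) n), ← smul_sub]
        congr 1
        abel
      rw [e3, hss, hss]
      have e4 : ‖(x (n + k) - x n) * (x (n + k) + x n)‖
          ≤ (s (n + k) - s n) * (s (n + k) + s n) := by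
        have h5 := norm_mul_le (x (n + k) - x n) (x (n + k) + x n)
        have h6 : ‖x (n + k) + x n‖ ≤ s (n + k) + s n :=
          (norm_add_le _ _).trans (add_le_add (hxnorm _) (hxnorm _))
        have h7 := hxnorm (n + k)
        have h8 : (0:ℝ) ≤ s (n + k) - s n := sub_nonneg.mpr (hsmono (Nat.le_add_right n k))
        nlinarith [norm_nonneg (x (n + k) - x n), norm_nonneg (x (n + k) + x n), ih]
      have e5 : ‖(2:ℝ)⁻¹ • ((x (n + k) - x n) * (x (n + k) + x n))‖
          = 2⁻¹ * ‖(x (n + k) - x n) * (x (n + k) + x n)‖ := by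
        rw [norm_smul ((2:ℝ)⁻¹) ((x (n + k) - x n) * (x (n + k) + x n))]; norm_num
      rw [e5]
      nlinarith [e4]
  -- Cauchy
  have hbdd : BddAbove (Set.range s) := ⟨1, by rintro y ⟨n, rfl⟩; exact (hs01 n).2⟩
  have hL : Tendsto s atTop (𝓝 (⨆ n, s n)) := tendsto_atTop_ciSup hsmono hbdd
  have hxc : CauchySeq x := by
    apply cauchySeq_of_le_tendsto_0 (fun N => (⨆ n, s n) - s N)
    · intro n m N hn hm
      wlog hnm : m ≤ n generalizing n m
      · rw [dist_comm]
        exact this m n hm hn (le_of_not_ge hnm)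
      obtain ⟨k, rfl⟩ := Nat.exists_eq_add_of_le hnm
      rw [dist_eq_norm]
      calc ‖x (m + k) - x m‖ ≤ s (m + k) - s m := hdiff k m
        _ ≤ (⨆ n, s n) - s N :=
          sub_le_sub (le_ciSup hbdd (m + k)) (hsmono hm)
    · have h28 := (tendsto_const_nhds (x := (⨆ n, s n))).sub hL
      simpa using h28
  obtain ⟨X, hX⟩ := cauchySeq_tendsto_of_complete hxc
  have hX1 : Tendsto (fun n => x (n + 1)) atTop (𝓝 X) := hX.comp (tendsto_add_atTop_nat 1)
  have hX2 : Tendsto (fun n => (2:ℝ)⁻¹ • (a + x n * x n)) atTop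
      (𝓝 ((2:ℝ)⁻¹ • (a + X * X))) :=
    ((tendsto_const_nhds.add (hX.mul hX)).const_smul _)
  have hfix : X = (2:ℝ)⁻¹ • (a + X * X) := by
    refine tendsto_nhds_unique hX1 ?_
    have : (fun n => x (n + 1)) = fun n => (2:ℝ)⁻¹ • (a + x n * x n) :=
      funext fun n => hxs n
    rw [this]
    exact hX2
  have hXnorm : ‖X‖ ≤ 1 :=
    le_of_tendsto hX.norm (Eventually.of_forall fun n => (hxnorm n).trans (hs01 n).2)
  have hXsa : IsSelfAdjoint X := by
    have h9 : Tendsto (fun n => star (x n)) atTop (𝓝 (star X)) :=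
      (continuous_star.tendsto X).comp hX
    have h10 : (fun n => star (x n)) = x := funext fun n => (hxsa n).star_eq
    rw [h10] at h9
    exact tendsto_nhds_unique h9 hX
  have hcommX : ∀ D : H →L[ℝ] H, D * a = a * D → D * X = X * D := by
    intro D hD
    have h11 : Tendsto (fun n => D * x n) atTop (𝓝 (D * X)) :=
      Filter.Tendsto.mul tendsto_const_nhds hX
    have h12 : Tendsto (fun n => x n * D) atTop (𝓝 (X * D)) :=
      Filter.Tendsto.mul hX tendsto_const_nhds
    have h13 : (fun n => D * x n) = fun n => x n * D := funext fun n => hcommx D hD n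
    rw [h13] at h11
    exact tendsto_nhds_unique h11 h12
  have hXXeq : X * X = X + X - a := by
    have h14 : X + X = a + X * X := by
      have := congrArg (fun Z : H →L[ℝ] H => (2:ℝ) • Z) hfix
      simp only [smul_smul] at this
      norm_num at this
      rw [two_smul] at this
      exact this
    rw [h14]; abel
  set W : H →L[ℝ] H := 1 - X with hW
  have hWsq : W * W = C := by
    have h15 : W * W = 1 - X - X + X * X := by rw [hW]; noncomm_ring
    rw [h15, hXXeq, ha]
    abel
  have hWsa : IsSelfAdjoint W := by
    show star _ = _
    rw [hW, star_sub, star_one, hXsa.star_eq]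
  have hWpos : W.IsPositive := by
    refine ⟨ContinuousLinearMap.isSelfAdjoint_iff_isSymmetric.mp hWsa, fun y => ?_⟩
    show (0:ℝ) ≤ ⟪W y, y⟫
    have h16 : ⟪W y, y⟫ = ‖y‖ ^ 2 - ⟪X y, y⟫ := by
      rw [hW, ContinuousLinearMap.sub_apply, inner_sub_left, ContinuousLinearMap.one_apply,
        real_inner_self_eq_norm_sq]
    have h17 : ⟪X y, y⟫ ≤ ‖X‖ * ‖y‖ ^ 2 := inner_le_norm_sq X y
    have h18 : ‖X‖ * ‖y‖ ^ 2 ≤ ‖y‖ ^ 2 := by nlinarith [sq_nonneg ‖y‖]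
    linarith
  have hVa : V * a = a * V := by
    rw [ha, mul_sub, sub_mul, mul_one, one_mul, ← hVC, mul_assoc]
  have hcommW : ∀ D : H →L[ℝ] H, D * a = a * D → D * W = W * D := by
    intro D hD
    rw [hW, mul_sub, sub_mul, mul_one, one_mul, hcommX D hD]
  have hVW : V * W = W * V := hcommW V hVa
  have hVeqW : V = W := by
    ext z
    set y := (V - W) z with hy
    have hsum0 : ⟪V y, y⟫ + ⟪W y, y⟫ = 0 := by
      have hop : (V + W) * (V - W) = 0 := by
        have h19 : (V + W) * (V - W) = V * V - W * W + (W * V - V * W) := by noncomm_ring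
        rw [h19, hVC, hWsq, hVW]
        abel
      have happ : (V + W) y = 0 := by
        have h20 : (V + W) ((V - W) z) = ((V + W) * (V - W)) z := rfl
        rw [hy, h20, hop, ContinuousLinearMap.zero_apply]
      have h21 : ⟪V y, y⟫ + ⟪W y, y⟫ = ⟪(V + W) y, y⟫ := by
        rw [ContinuousLinearMap.add_apply, inner_add_left]
      rw [h21, happ, inner_zero_left]
    have hVy : ⟪V y, y⟫ = 0 := by
      have := pos_inner hV y
      have := pos_inner hWpos y
      linarith
    have hWy : ⟪W y, y⟫ = 0 := by
      have := pos_inner hV y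
      have := pos_inner hWpos y
      linarith
    have hzero : ∀ (U : H →L[ℝ] H), U.IsPositive → ⟪U y, y⟫ = 0 → U y = 0 := by
      intro U hU h0
      have h22 := cs_pos hU y (U y)
      rw [h0, zero_mul] at h22
      have h23 : ⟪U y, U y⟫ = ‖U y‖ ^ 2 := real_inner_self_eq_norm_sq _
      rw [h23] at h22
      have h24 : ‖U y‖ ^ 2 = 0 :=
        le_antisymm (by nlinarith [sq_nonneg ‖U y‖]) (sq_nonneg _)
      exact norm_eq_zero.mp (sq_eq_zero_iff.mp h24)
    have hVy0 : V y = 0 := hzero V hV hVy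
    have hWy0 : W y = 0 := hzero W hWpos hWy
    have hVWsa : IsSelfAdjoint (V - W) := by
      show star _ = _
      rw [star_sub, hV.isSelfAdjoint.star_eq, hWsa.star_eq]
    have hyy : ⟪y, y⟫ = 0 := by
      have h25 : ⟪y, y⟫ = ⟪(V - W) z, y⟫ := by rw [hy]
      rw [h25, symm_apply hVWsa]
      have h26 : (V - W) y = 0 := by
        rw [ContinuousLinearMap.sub_apply, hVy0, hWy0, sub_zero]
      rw [h26, inner_zero_right]
    have hy0 : y = 0 := by
      have := inner_self_eq_zero.mp hyy
      exact this
    have h27 : V z - W z = 0 := by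
      have h28 : (V - W) z = V z - W z := rfl
      rw [← h28, ← hy, hy0]
    exact sub_eq_zero.mp h27
  have hTa : T * a = a * T := by
    rw [ha, mul_sub, sub_mul, mul_one, one_mul, hT]
  rw [hVeqW]
  exact hcommW T hTa

set_option maxHeartbeats 1000000 in
lemma key_bounds {A S R : H →L[ℝ] H} (hA : A.IsPositive) (hS : S.IsPositive)
    (hSA : S * S = A) (hR : R.IsPositive) {γ : ℝ} (hγ : 0 < γ)
    (h1 : (R * R) * (A + γ • (1 : H →L[ℝ] H)) = 1)
    (h2 : (A + γ • (1 : H →L[ℝ] H)) * (R * R) = 1) :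
    ‖S * R‖ ≤ 1 ∧ ‖R * A - S‖ ≤ Real.sqrt γ ∧ R * A = A * R ∧ R * S = S * R ∧
      IsSelfAdjoint (R * A - S) := by
  have hRsa := hR.isSelfAdjoint
  have hSsa := hS.isSelfAdjoint
  have hAsa := hA.isSelfAdjoint
  -- commutation of R with A + γ 1
  have hcomm1 : (A + γ • (1 : H →L[ℝ] H)) * R = R * (A + γ • (1 : H →L[ℝ] H)) := by
    have hb : ((A + γ • (1 : H →L[ℝ] H)) * R) * R = 1 := by rw [mul_assoc]; exact h2
    have hc : R * (R * (A + γ • (1 : H →L[ℝ] H))) = 1 := by rw [← mul_assoc]; exact h1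
    exact left_inv_eq_right_inv hb hc
  have hRA : R * A = A * R := by
    have h3 : R * (A + γ • (1 : H →L[ℝ] H)) = R * A + γ • R := by
      rw [mul_add, clm_mul_smul, mul_one]
    have h4 : (A + γ • (1 : H →L[ℝ] H)) * R = A * R + γ • R := by
      rw [add_mul, clm_smul_mul, one_mul]
    have h5 := hcomm1
    rw [h3, h4] at h5
    exact (add_left_injective (γ • R) h5).symm ▸ rfl
  have hmid : R * (A + γ • (1 : H →L[ℝ] H)) * R = 1 := by
    rw [mul_assoc, hcomm1, ← mul_assoc]
    exact h1
  -- energy identity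
  have energy : ∀ x, ‖S (R x)‖ ^ 2 + γ * ‖R x‖ ^ 2 = ‖x‖ ^ 2 := by
    intro x
    have e1 : ⟪(A + γ • (1 : H →L[ℝ] H)) (R x), R x⟫
        = ⟪A (R x), R x⟫ + γ * ⟪R x, R x⟫ := by
      rw [ContinuousLinearMap.add_apply, ContinuousLinearMap.smul_apply,
        ContinuousLinearMap.one_apply, inner_add_left, real_inner_smul_left]
    have e2 : ⟪A (R x), R x⟫ = ‖S (R x)‖ ^ 2 := by
      rw [← hSA]
      have : (S * S) (R x) = S (S (R x)) := rfl
      rw [this, symm_apply hSsa, real_inner_self_eq_norm_sq]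
    have e3 : ⟪(A + γ • (1 : H →L[ℝ] H)) (R x), R x⟫ = ‖x‖ ^ 2 := by
      rw [← symm_apply hRsa ((A + γ • (1 : H →L[ℝ] H)) (R x)) x]
      have : R ((A + γ • (1 : H →L[ℝ] H)) (R x))
          = (R * (A + γ • (1 : H →L[ℝ] H)) * R) x := rfl
      rw [this, hmid, ContinuousLinearMap.one_apply, real_inner_self_eq_norm_sq]
    rw [e1, e2, real_inner_self_eq_norm_sq] at e3
    linarith [e3]
  have hSR : ‖S * R‖ ≤ 1 := by
    apply ContinuousLinearMap.opNorm_le_bound _ zero_le_one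
    intro x
    have e4 : (S * R) x = S (R x) := rfl
    rw [e4, one_mul]
    nlinarith [energy x, norm_nonneg (S (R x)), norm_nonneg x, sq_nonneg ‖R x‖,
      mul_nonneg hγ.le (sq_nonneg ‖R x‖)]
  have hRγ : ∀ x, Real.sqrt γ * ‖R x‖ ≤ ‖x‖ := by
    intro x
    have e5 : γ * ‖R x‖ ^ 2 ≤ ‖x‖ ^ 2 := by nlinarith [energy x, sq_nonneg ‖S (R x)‖]
    have e6 : (Real.sqrt γ * ‖R x‖) ^ 2 = γ * ‖R x‖ ^ 2 := by
      rw [mul_pow, Real.sq_sqrt hγ.le]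
    nlinarith [mul_nonneg (Real.sqrt_nonneg γ) (norm_nonneg (R x)), norm_nonneg x]
  -- commutation R S = S R via unique positive square root
  have hRS : R * S = S * R := by
    set c : ℝ := ‖A‖ + 1 with hcdef
    have hcpos : (0:ℝ) < c := by positivity
    have hsc : Real.sqrt c * Real.sqrt c = c := Real.mul_self_sqrt hcpos.le
    have hscpos : (0:ℝ) < Real.sqrt c := Real.sqrt_pos.mpr hcpos
    set C : H →L[ℝ] H := c⁻¹ • A with hCdef
    set V : H →L[ℝ] H := (Real.sqrt c)⁻¹ • S with hVdef
    have hCpos : C.IsPositive := by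
      refine ⟨?_, fun y => ?_⟩
      · refine ContinuousLinearMap.isSelfAdjoint_iff_isSymmetric.mp ?_
        show star _ = _
        rw [hCdef, star_smul, star_trivial, hAsa.star_eq]
      · show (0:ℝ) ≤ ⟪C y, y⟫
        rw [hCdef, ContinuousLinearMap.smul_apply, real_inner_smul_left]
        exact mul_nonneg (by positivity) (pos_inner hA y)
    have hC1 : ∀ y, ⟪C y, y⟫ ≤ ‖y‖ ^ 2 := by
      intro y
      rw [hCdef, ContinuousLinearMap.smul_apply, real_inner_smul_left]
      have h6 : ⟪A y, y⟫ ≤ ‖A‖ * ‖y‖ ^ 2 := inner_le_norm_sq A y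
      have h7 : c⁻¹ * ⟪A y, y⟫ ≤ c⁻¹ * (‖A‖ * ‖y‖ ^ 2) :=
        mul_le_mul_of_nonneg_left h6 (by positivity)
      have h8 : c⁻¹ * ‖A‖ ≤ 1 := by
        rw [← div_eq_inv_mul]
        exact (div_le_one hcpos).mpr (by rw [hcdef]; linarith)
      nlinarith [sq_nonneg ‖y‖, norm_nonneg A]
    have hVpos : V.IsPositive := by
      refine ⟨?_, fun y => ?_⟩
      · refine ContinuousLinearMap.isSelfAdjoint_iff_isSymmetric.mp ?_
        show star _ = _
        rw [hVdef, star_smul, star_trivial, hSsa.star_eq]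
      · show (0:ℝ) ≤ ⟪V y, y⟫
        rw [hVdef, ContinuousLinearMap.smul_apply, real_inner_smul_left]
        exact mul_nonneg (by positivity) (pos_inner hS y)
    have hVC : V * V = C := by
      rw [hVdef, clm_smul_mul, clm_mul_smul, smul_smul, hSA, hCdef]
      congr 1
      rw [← mul_inv, hsc]
    have hTC : R * C = C * R := by
      rw [hCdef, clm_mul_smul, clm_smul_mul, hRA]
    have h9 : R * V = V * R := commute_sqrt_aux hCpos hC1 hVpos hVC hTC
    rw [hVdef, clm_mul_smul, clm_smul_mul] at h9
    have h10 := congrArg (fun Z : H →L[ℝ] H => Real.sqrt c • Z) h9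
    simpa [smul_smul, mul_inv_cancel₀ hscpos.ne'] using h10
  -- self-adjointness of X = R A - S
  have hXsa : IsSelfAdjoint (R * A - S) := by
    show star _ = _
    rw [star_sub, star_mul, hRsa.star_eq, hAsa.star_eq, hSsa.star_eq, ← hRA]
  -- norm bound on X
  have hXnorm : ‖R * A - S‖ ≤ Real.sqrt γ := by
    apply norm_le_of_inner_le hXsa (Real.sqrt_nonneg γ)
    intro x
    set QQ : H →L[ℝ] H := R * (A + γ • (1 : H →L[ℝ] H)) with hQQdef
    have hRQQ : R * QQ = 1 := by rw [hQQdef, ← mul_assoc]; exact h1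
    set r : ℝ := ⟪(R * A) x, x⟫ with hrdef
    set s : ℝ := ⟪S x, x⟫ with hsdef
    set ρ : ℝ := ⟪R x, x⟫ with hρdef
    -- r as a positive form
    have gSR : S (R x) = R (S x) := by
      have : (S * R) x = (R * S) x := by rw [hRS]
      simpa using this
    have fr : r = ⟪R (S x), S x⟫ := by
      calc r = ⟪R (A x), x⟫ := rfl
        _ = ⟪A x, R x⟫ := symm_apply hRsa (A x) x
        _ = ⟪S (S x), R x⟫ := by rw [show A x = S (S x) by rw [← hSA]; rfl]
        _ = ⟪S x, S (R x)⟫ := symm_apply hSsa (S x) (R x)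
        _ = ⟪S x, R (S x)⟫ := by rw [gSR]
        _ = ⟪R (S x), S x⟫ := real_inner_comm _ _
    have hr0 : 0 ≤ r := fr ▸ pos_inner hR (S x)
    have hs0 : 0 ≤ s := pos_inner hS x
    have hρ0 : 0 ≤ ρ := pos_inner hR x
    -- Cauchy-Schwarz 1 : s² ≤ r q
    have fs : ⟪R (S x), QQ x⟫ = s := by
      rw [symm_apply hRsa]
      have g6 : R (QQ x) = (R * QQ) x := rfl
      rw [g6, hRQQ, ContinuousLinearMap.one_apply, hsdef]
    have fq : ⟪R (QQ x), QQ x⟫ = ⟪QQ x, x⟫ := by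
      have g7 : R (QQ x) = (R * QQ) x := rfl
      rw [g7, hRQQ, ContinuousLinearMap.one_apply, real_inner_comm]
    have hqval : ⟪QQ x, x⟫ = r + γ * ρ := by
      have g8 : QQ = R * A + γ • R := by
        rw [hQQdef, mul_add, clm_mul_smul, mul_one]
      rw [g8, ContinuousLinearMap.add_apply, inner_add_left, ContinuousLinearMap.smul_apply,
        real_inner_smul_left, hrdef, hρdef]
    have cs1 : s ^ 2 ≤ r * (r + γ * ρ) := by
      have := cs_pos hR (S x) (QQ x)
      rw [fs, ← fr, fq, hqval] at this
      exact this
    -- upper bound r ≤ s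
    have hrs : r ≤ s := by
      have cs2 := cs_pos hS (R (S x)) x
      have fr2 : ⟪S (R (S x)), x⟫ = r := by
        calc ⟪S (R (S x)), x⟫ = ⟪R (S x), S x⟫ := symm_apply hSsa (R (S x)) x
          _ = r := fr.symm
      rw [fr2] at cs2
      set t : ℝ := ⟪S (R (S x)), R (S x)⟫ with htdef
      have htr : t ≤ r := by
        have h1mSR : ((1 : H →L[ℝ] H) - S * R).IsPositive := by
          refine ⟨?_, fun y => ?_⟩
          · refine ContinuousLinearMap.isSelfAdjoint_iff_isSymmetric.mp ?_
            show star _ = _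
            rw [star_sub, star_one, star_mul, hRsa.star_eq, hSsa.star_eq, hRS]
          · show (0:ℝ) ≤ ⟪((1 : H →L[ℝ] H) - S * R) y, y⟫
            rw [ContinuousLinearMap.sub_apply, inner_sub_left, ContinuousLinearMap.one_apply,
              real_inner_self_eq_norm_sq]
            have g9 : ⟪(S * R) y, y⟫ ≤ ‖(S * R) y‖ * ‖y‖ := real_inner_le_norm _ _
            have g10 : ‖(S * R) y‖ ≤ ‖S * R‖ * ‖y‖ := (S * R).le_opNorm y
            nlinarith [norm_nonneg y, norm_nonneg ((S * R) y)]
        have hcommG : R * ((1 : H →L[ℝ] H) - S * R) = ((1 : H →L[ℝ] H) - S * R) * R := by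
          rw [mul_sub, sub_mul, mul_one, one_mul]
          have g11 : R * (S * R) = (S * R) * R := by
            conv_lhs => rw [← mul_assoc, hRS, mul_assoc]
            rw [← mul_assoc]
          rw [g11]
        have hGpos := isPositive_mul_of_commute hR h1mSR hcommG
        have g12 := pos_inner hGpos (S x)
        have g13 : (R * ((1 : H →L[ℝ] H) - S * R)) (S x) = R (S x) - R (S (R (S x))) := by
          rw [mul_sub, mul_one]
          rfl
        rw [g13, inner_sub_left] at g12
        have g14 : ⟪R (S (R (S x))), S x⟫ = t := by
          rw [symm_apply hRsa]
        rw [g14, ← fr] at g12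
        linarith
      nlinarith [cs2, mul_le_mul_of_nonneg_right htr hs0, hr0, hs0]
    -- lower bound s - r ≤ √γ ‖x‖²
    have hγρ : γ * ρ ≤ Real.sqrt γ * ‖x‖ ^ 2 := by
      have g16 : ρ ≤ ‖R x‖ * ‖x‖ := by
        rw [hρdef]; exact real_inner_le_norm _ _
      have g17 := hRγ x
      have g18 : γ = Real.sqrt γ * Real.sqrt γ := (Real.mul_self_sqrt hγ.le).symm
      have p1 : Real.sqrt γ * Real.sqrt γ * ρ ≤ Real.sqrt γ * Real.sqrt γ * (‖R x‖ * ‖x‖) :=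
        mul_le_mul_of_nonneg_left g16 (by positivity)
      have p2 : Real.sqrt γ * ‖R x‖ * ‖x‖ ≤ ‖x‖ * ‖x‖ :=
        mul_le_mul_of_nonneg_right g17 (norm_nonneg x)
      nlinarith [p1, p2, Real.sqrt_nonneg γ, norm_nonneg x, norm_nonneg (R x), hρ0]
    have hsr : s - r ≤ Real.sqrt γ * ‖x‖ ^ 2 := by
      have g19 : s ≤ r + γ * ρ / 2 := by
        nlinarith [cs1, hr0, hs0, mul_nonneg hγ.le hρ0, sq_nonneg (γ * ρ)]
      linarith [mul_nonneg (Real.sqrt_nonneg γ) (sq_nonneg ‖x‖)]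
    have hXval : ⟪(R * A - S) x, x⟫ = r - s := by
      rw [ContinuousLinearMap.sub_apply, inner_sub_left, hrdef, hsdef]
    rw [hXval, abs_le]
    constructor
    · linarith
    · have := mul_nonneg (Real.sqrt_nonneg γ) (sq_nonneg ‖x‖)
      linarith
  exact ⟨hSR, hXnorm, hRA, hRS, hXsa⟩

noncomputable def eHS (b : HilbertBasis ℕ ℝ H) (T : H →L[ℝ] H) : ℝ≥0∞ :=
  ∑' n, (‖T (b n)‖₊ : ℝ≥0∞) ^ 2

lemma ofReal_sq_real (a : ℝ) : ENNReal.ofReal (a ^ 2) = (‖a‖₊ : ℝ≥0∞) ^ 2 := by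
  rw [show a ^ 2 = ‖a‖ ^ 2 by rw [Real.norm_eq_abs, sq_abs],
    ENNReal.ofReal_pow (norm_nonneg a), ofReal_norm, enorm_eq_nnnorm]

lemma ofReal_norm_sq (v : H) : ENNReal.ofReal (‖v‖ ^ 2) = (‖v‖₊ : ℝ≥0∞) ^ 2 := by
  rw [ENNReal.ofReal_pow (norm_nonneg v), ofReal_norm, enorm_eq_nnnorm]

lemma parseval_sq (b : HilbertBasis ℕ ℝ H) (v : H) :
    Summable (fun m => (⟪b m, v⟫ : ℝ) ^ 2) ∧ ∑' m, (⟪b m, v⟫ : ℝ) ^ 2 = ‖v‖ ^ 2 := by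
  have h1 : (fun m => (⟪v, b m⟫ : ℝ) * ⟪b m, v⟫) = fun m => (⟪b m, v⟫ : ℝ) ^ 2 := by
    funext m
    rw [sq, real_inner_comm v (b m)]
  constructor
  · have := b.summable_inner_mul_inner v v
    rwa [h1] at this
  · have := b.tsum_inner_mul_inner v v
    rw [h1] at this
    rw [this, real_inner_self_eq_norm_sq]

lemma parseval_ennreal (b : HilbertBasis ℕ ℝ H) (v : H) :
    (‖v‖₊ : ℝ≥0∞) ^ 2 = ∑' m, (‖(⟪b m, v⟫ : ℝ)‖₊ : ℝ≥0∞) ^ 2 := by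
  obtain ⟨hsum, htsum⟩ := parseval_sq b v
  rw [← ofReal_norm_sq, ← htsum, ENNReal.ofReal_tsum_of_nonneg (fun m => sq_nonneg _) hsum]
  exact tsum_congr fun m => ofReal_sq_real _

lemma eHS_adjoint (b : HilbertBasis ℕ ℝ H) (T : H →L[ℝ] H) :
    eHS b T = eHS b (ContinuousLinearMap.adjoint T) := by
  unfold eHS
  calc ∑' n, (‖T (b n)‖₊ : ℝ≥0∞) ^ 2
      = ∑' n, ∑' m, (‖(⟪b m, T (b n)⟫ : ℝ)‖₊ : ℝ≥0∞) ^ 2 :=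
        tsum_congr fun n => parseval_ennreal b _
    _ = ∑' m, ∑' n, (‖(⟪b m, T (b n)⟫ : ℝ)‖₊ : ℝ≥0∞) ^ 2 := ENNReal.tsum_comm
    _ = ∑' m, (‖(ContinuousLinearMap.adjoint T) (b m)‖₊ : ℝ≥0∞) ^ 2 := by
        refine tsum_congr fun m => ?_
        rw [parseval_ennreal b ((ContinuousLinearMap.adjoint T) (b m))]
        refine tsum_congr fun n => ?_
        congr 2
        rw [ContinuousLinearMap.adjoint_inner_right, real_inner_comm]

lemma eHS_comp_le (b : HilbertBasis ℕ ℝ H) (X Y : H →L[ℝ] H) :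
    eHS b (X * Y) ≤ (‖X‖₊ : ℝ≥0∞) ^ 2 * eHS b Y := by
  unfold eHS
  rw [← ENNReal.tsum_mul_left]
  refine ENNReal.tsum_le_tsum fun n => ?_
  have h := X.le_opNNNorm (Y (b n))
  have h2 : ((X * Y) (b n)) = X (Y (b n)) := rfl
  rw [h2, ← mul_pow]
  exact pow_le_pow_left₀ (zero_le') (by exact_mod_cast h) 2

lemma eHS_toReal (b : HilbertBasis ℕ ℝ H) (T : H →L[ℝ] H) :
    (eHS b T).toReal = ∑' n, ‖T (b n)‖ ^ 2 := by
  unfold eHS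
  rw [ENNReal.tsum_toReal_eq (fun n => by exact_mod_cast ENNReal.coe_ne_top)]
  refine tsum_congr fun n => ?_
  simp [ENNReal.toReal_pow]

lemma eHS_fin_iff (b : HilbertBasis ℕ ℝ H) (T : H →L[ℝ] H) :
    eHS b T ≠ ∞ ↔ Summable fun n => ‖T (b n)‖ ^ 2 := by
  unfold eHS
  have h1 : (fun n => (‖T (b n)‖₊ : ℝ≥0∞) ^ 2) = fun n => ((‖T (b n)‖₊ ^ 2 : ℝ≥0) : ℝ≥0∞) := by
    funext n; push_cast; ring
  rw [h1, ENNReal.tsum_coe_ne_top_iff_summable]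
  constructor
  · intro h
    have := NNReal.summable_coe.mpr h
    simpa [NNReal.coe_pow] using this
  · intro h
    rw [← NNReal.summable_coe]
    simpa [NNReal.coe_pow] using h


lemma l2_tsum_minkowski {f g : ℕ → ℝ} (hf0 : ∀ n, 0 ≤ f n) (hg0 : ∀ n, 0 ≤ g n)
    (hf : Summable fun n => f n ^ 2) (hg : Summable fun n => g n ^ 2) :
    Summable (fun n => (f n + g n) ^ 2) ∧
      Real.sqrt (∑' n, (f n + g n) ^ 2)
        ≤ Real.sqrt (∑' n, f n ^ 2) + Real.sqrt (∑' n, g n ^ 2) := by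
  have hf' : Summable fun n => f n ^ (2:ℝ) := by
    simpa only [Real.rpow_two] using hf
  have hg' : Summable fun n => g n ^ (2:ℝ) := by
    simpa only [Real.rpow_two] using hg
  have mink := Real.Lp_add_le_tsum_of_nonneg (by norm_num : (1:ℝ) ≤ 2) hf0 hg0 hf' hg'
  have m1 := mink.1
  have m2 := mink.2
  simp only [Real.rpow_two] at m1 m2
  rw [← Real.sqrt_eq_rpow, ← Real.sqrt_eq_rpow, ← Real.sqrt_eq_rpow] at m2
  exact ⟨m1, m2⟩

end Stmt8Helpers

open Filter Topology ENNReal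
open scoped RealInnerProductSpace NNReal

/-- Let `A` be a self-adjoint, positive, trace class operator on a real separable
Hilbert space (with Hilbert basis `b`), with positive square root `sqrtA` and
inverse square roots `rsqrt γ = (A+γI)^{-1/2}`, and let `B` be a bounded operator.
Then `‖(A+γI)^{-1/2} A B A (A+γI)^{-1/2} − A^{1/2} B A^{1/2}‖_{HS}
  ≤ √γ (‖A^{1/2}B‖_{HS} + ‖BA^{1/2}‖_{HS})` for every `γ > 0`, and in particular
this Hilbert-Schmidt norm tends to `0` as `γ → 0⁺`. -/
theorem stmt8
    {H : Type*} [NormedAddCommGroup H] [InnerProductSpace ℝ H] [CompleteSpace H]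
    (b : HilbertBasis ℕ ℝ H)
    (A sqrtA : H →L[ℝ] H)
    (hA_pos : A.IsPositive)
    (hA_tr : Summable fun n => ⟪b n, A (b n)⟫)
    (hsqrt_pos : sqrtA.IsPositive)
    (hsqrt : sqrtA * sqrtA = A)
    (rsqrt : ℝ → (H →L[ℝ] H))
    (hrsqrt : ∀ γ : ℝ, 0 < γ →
      (rsqrt γ).IsPositive ∧
      (rsqrt γ * rsqrt γ) * (A + γ • (1 : H →L[ℝ] H)) = 1 ∧
      (A + γ • (1 : H →L[ℝ] H)) * (rsqrt γ * rsqrt γ) = 1)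
    (B : H →L[ℝ] H) :
    (∀ γ : ℝ, 0 < γ →
      Real.sqrt (∑' n, ‖(rsqrt γ * A * B * A * rsqrt γ - sqrtA * B * sqrtA) (b n)‖ ^ 2)
        ≤ Real.sqrt γ *
          (Real.sqrt (∑' n, ‖(sqrtA * B) (b n)‖ ^ 2) +
            Real.sqrt (∑' n, ‖(B * sqrtA) (b n)‖ ^ 2))) ∧
    Tendsto
      (fun γ : ℝ =>
        Real.sqrt (∑' n, ‖(rsqrt γ * A * B * A * rsqrt γ - sqrtA * B * sqrtA) (b n)‖ ^ 2))
      (𝓝[>] 0) (𝓝 0) := by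
  classical
  have hSsa := hsqrt_pos.isSelfAdjoint
  have hSadj : ContinuousLinearMap.adjoint sqrtA = sqrtA := by
    rw [← ContinuousLinearMap.star_eq_adjoint, hSsa.star_eq]
  have hAadj : ContinuousLinearMap.adjoint A = A := by
    rw [← ContinuousLinearMap.star_eq_adjoint, hA_pos.isSelfAdjoint.star_eq]
  have adj_mul : ∀ f g : H →L[ℝ] H, ContinuousLinearMap.adjoint (f * g)
      = ContinuousLinearMap.adjoint g * ContinuousLinearMap.adjoint f := fun f g =>
    ContinuousLinearMap.adjoint_comp f g
  -- summability from the trace hypothesis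
  have hSsum : Summable fun n => ‖sqrtA (b n)‖ ^ 2 := by
    have h1 : ∀ n, ⟪b n, A (b n)⟫ = ‖sqrtA (b n)‖ ^ 2 := by
      intro n
      calc ⟪b n, A (b n)⟫ = ⟪b n, sqrtA (sqrtA (b n))⟫ := by rw [← hsqrt]; rfl
        _ = ⟪sqrtA (b n), sqrtA (b n)⟫ := (symm_apply hSsa (b n) (sqrtA (b n))).symm
        _ = ‖sqrtA (b n)‖ ^ 2 := real_inner_self_eq_norm_sq _
    have h2 : (fun n => ⟪b n, A (b n)⟫) = fun n => ‖sqrtA (b n)‖ ^ 2 := funext h1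
    rwa [h2] at hA_tr
  have heS : eHS b sqrtA ≠ ∞ := (eHS_fin_iff b sqrtA).mpr hSsum
  have heBSfin : eHS b (B * sqrtA) ≠ ∞ := by
    have h3 : (‖B‖₊ : ℝ≥0∞) ^ 2 * eHS b sqrtA ≠ ∞ :=
      ENNReal.mul_ne_top (ENNReal.pow_ne_top ENNReal.coe_ne_top) heS
    exact ne_top_of_le_ne_top h3 (eHS_comp_le b B sqrtA)
  have heSBfin : eHS b (sqrtA * B) ≠ ∞ := by
    rw [eHS_adjoint b (sqrtA * B), adj_mul, hSadj]
    have h3 : (‖ContinuousLinearMap.adjoint B‖₊ : ℝ≥0∞) ^ 2 * eHS b sqrtA ≠ ∞ :=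
      ENNReal.mul_ne_top (ENNReal.pow_ne_top ENNReal.coe_ne_top) heS
    exact ne_top_of_le_ne_top h3 (eHS_comp_le b (ContinuousLinearMap.adjoint B) sqrtA)
  have sBS : Summable fun n => ‖(B * sqrtA) (b n)‖ ^ 2 := (eHS_fin_iff b _).mp heBSfin
  have sSB : Summable fun n => ‖(sqrtA * B) (b n)‖ ^ 2 := (eHS_fin_iff b _).mp heSBfin
  -- the main quantitative bound
  have key : ∀ γ : ℝ, 0 < γ →
      Real.sqrt (∑' n, ‖(rsqrt γ * A * B * A * rsqrt γ - sqrtA * B * sqrtA) (b n)‖ ^ 2)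
        ≤ Real.sqrt γ *
          (Real.sqrt (∑' n, ‖(sqrtA * B) (b n)‖ ^ 2) +
            Real.sqrt (∑' n, ‖(B * sqrtA) (b n)‖ ^ 2)) := by
    intro γ hγ
    obtain ⟨hRpos, hinv1, hinv2⟩ := hrsqrt γ hγ
    set R : H →L[ℝ] H := rsqrt γ with hRdef
    obtain ⟨hSR, hXnorm, hRA, hRS, hXsa⟩ :=
      key_bounds hA_pos hsqrt_pos hsqrt hRpos hγ hinv1 hinv2
    have hRadj : ContinuousLinearMap.adjoint R = R := by
      rw [← ContinuousLinearMap.star_eq_adjoint, hRpos.isSelfAdjoint.star_eq]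
    set X1 : H →L[ℝ] H := (R * A - sqrtA) * (B * A * R) with hX1def
    set X2 : H →L[ℝ] H := (sqrtA * B) * (A * R - sqrtA) with hX2def
    have hD : R * A * B * A * R - sqrtA * B * sqrtA = X1 + X2 := by
      rw [hX1def, hX2def]; noncomm_ring
    -- ennreal norm facts
    have hnX : (‖R * A - sqrtA‖₊ : ℝ≥0∞) ^ 2 ≤ ENNReal.ofReal γ := by
      have h3 : ‖R * A - sqrtA‖ ^ 2 ≤ γ := by
        nlinarith [hXnorm, Real.sqrt_nonneg γ, Real.sq_sqrt hγ.le,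
          norm_nonneg (R * A - sqrtA)]
      calc (‖R * A - sqrtA‖₊ : ℝ≥0∞) ^ 2 = ENNReal.ofReal (‖R * A - sqrtA‖ ^ 2) := by
            rw [ENNReal.ofReal_pow (norm_nonneg _), ofReal_norm, enorm_eq_nnnorm]
        _ ≤ ENNReal.ofReal γ := ENNReal.ofReal_le_ofReal h3
    have hnSR : (‖R * sqrtA‖₊ : ℝ≥0∞) ^ 2 ≤ 1 := by
      have h4 : ‖R * sqrtA‖ ≤ 1 := by rw [hRS]; exact hSR
      have h5 : (‖R * sqrtA‖₊ : ℝ≥0∞) ≤ 1 := by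
        rw [← enorm_eq_nnnorm, ← ofReal_norm]
        calc ENNReal.ofReal ‖R * sqrtA‖ ≤ ENNReal.ofReal 1 := ENNReal.ofReal_le_ofReal h4
          _ = 1 := ENNReal.ofReal_one
      calc (‖R * sqrtA‖₊ : ℝ≥0∞) ^ 2 ≤ 1 ^ 2 := pow_le_pow_left₀ (zero_le') h5 2
        _ = 1 := one_pow 2
    -- eHS chains
    have heBAR : eHS b (B * A * R) ≤ eHS b (B * sqrtA) := by
      have hfac : B * A * R = (B * sqrtA) * (sqrtA * R) := by rw [← hsqrt]; noncomm_ring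
      rw [hfac, eHS_adjoint, adj_mul, adj_mul, adj_mul, hSadj, hRadj]
      calc eHS b ((R * sqrtA) * (sqrtA * ContinuousLinearMap.adjoint B))
          ≤ (‖R * sqrtA‖₊ : ℝ≥0∞) ^ 2 *
              eHS b (sqrtA * ContinuousLinearMap.adjoint B) := eHS_comp_le b _ _
        _ ≤ 1 * eHS b (sqrtA * ContinuousLinearMap.adjoint B) := mul_le_mul_left hnSR _
        _ = eHS b (sqrtA * ContinuousLinearMap.adjoint B) := one_mul _
        _ = eHS b (B * sqrtA) := by
            rw [eHS_adjoint b (sqrtA * ContinuousLinearMap.adjoint B), adj_mul,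
              ContinuousLinearMap.adjoint_adjoint, hSadj]
    have heX1 : eHS b X1 ≤ ENNReal.ofReal γ * eHS b (B * sqrtA) := by
      calc eHS b X1 ≤ (‖R * A - sqrtA‖₊ : ℝ≥0∞) ^ 2 * eHS b (B * A * R) :=
            eHS_comp_le b _ _
        _ ≤ ENNReal.ofReal γ * eHS b (B * sqrtA) := mul_le_mul' hnX heBAR
    have heX2 : eHS b X2 ≤ ENNReal.ofReal γ * eHS b (sqrtA * B) := by
      calc eHS b X2 = eHS b (ContinuousLinearMap.adjoint X2) := eHS_adjoint b X2
        _ = eHS b ((R * A - sqrtA) * (ContinuousLinearMap.adjoint B * sqrtA)) := by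
            rw [hX2def, adj_mul, map_sub, adj_mul, adj_mul, hSadj, hRadj, hAadj]
        _ ≤ (‖R * A - sqrtA‖₊ : ℝ≥0∞) ^ 2 *
            eHS b (ContinuousLinearMap.adjoint B * sqrtA) := eHS_comp_le b _ _
        _ ≤ ENNReal.ofReal γ * eHS b (ContinuousLinearMap.adjoint B * sqrtA) :=
            mul_le_mul_left hnX _
        _ = ENNReal.ofReal γ * eHS b (sqrtA * B) := by
            rw [eHS_adjoint b (ContinuousLinearMap.adjoint B * sqrtA), adj_mul, hSadj,
              ContinuousLinearMap.adjoint_adjoint]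
    have heX1fin : eHS b X1 ≠ ∞ :=
      ne_top_of_le_ne_top (ENNReal.mul_ne_top ENNReal.ofReal_ne_top heBSfin) heX1
    have heX2fin : eHS b X2 ≠ ∞ :=
      ne_top_of_le_ne_top (ENNReal.mul_ne_top ENNReal.ofReal_ne_top heSBfin) heX2
    have sX1 : Summable fun n => ‖X1 (b n)‖ ^ 2 := (eHS_fin_iff b _).mp heX1fin
    have sX2 : Summable fun n => ‖X2 (b n)‖ ^ 2 := (eHS_fin_iff b _).mp heX2fin
    have q1 : ∑' n, ‖X1 (b n)‖ ^ 2 ≤ γ * ∑' n, ‖(B * sqrtA) (b n)‖ ^ 2 := by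
      have h6 := ENNReal.toReal_mono (ENNReal.mul_ne_top ENNReal.ofReal_ne_top heBSfin) heX1
      rwa [ENNReal.toReal_mul, ENNReal.toReal_ofReal hγ.le, eHS_toReal, eHS_toReal] at h6
    have q2 : ∑' n, ‖X2 (b n)‖ ^ 2 ≤ γ * ∑' n, ‖(sqrtA * B) (b n)‖ ^ 2 := by
      have h6 := ENNReal.toReal_mono (ENNReal.mul_ne_top ENNReal.ofReal_ne_top heSBfin) heX2
      rwa [ENNReal.toReal_mul, ENNReal.toReal_ofReal hγ.le, eHS_toReal, eHS_toReal] at h6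
    -- Minkowski
    obtain ⟨hmink1, hmink2⟩ := l2_tsum_minkowski (f := fun n => ‖X1 (b n)‖)
      (g := fun n => ‖X2 (b n)‖) (fun n => norm_nonneg _) (fun n => norm_nonneg _) sX1 sX2
    have hpt : ∀ n, ‖(R * A * B * A * R - sqrtA * B * sqrtA) (b n)‖ ^ 2
        ≤ (‖X1 (b n)‖ + ‖X2 (b n)‖) ^ 2 := by
      intro n
      have h7 : (R * A * B * A * R - sqrtA * B * sqrtA) (b n) = X1 (b n) + X2 (b n) := by
        rw [hD]; rfl
      rw [h7]
      exact pow_le_pow_left₀ (norm_nonneg _) (norm_add_le _ _) 2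
    have hDsum : Summable fun n => ‖(R * A * B * A * R - sqrtA * B * sqrtA) (b n)‖ ^ 2 :=
      Summable.of_nonneg_of_le (fun n => sq_nonneg _) hpt hmink1
    have hstep1 : ∑' n, ‖(R * A * B * A * R - sqrtA * B * sqrtA) (b n)‖ ^ 2
        ≤ ∑' n, (‖X1 (b n)‖ + ‖X2 (b n)‖) ^ 2 := Summable.tsum_le_tsum hpt hDsum hmink1
    have e1 : Real.sqrt (∑' n, ‖X1 (b n)‖ ^ 2)
        ≤ Real.sqrt γ * Real.sqrt (∑' n, ‖(B * sqrtA) (b n)‖ ^ 2) := by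
      rw [← Real.sqrt_mul hγ.le]
      exact Real.sqrt_le_sqrt q1
    have e2 : Real.sqrt (∑' n, ‖X2 (b n)‖ ^ 2)
        ≤ Real.sqrt γ * Real.sqrt (∑' n, ‖(sqrtA * B) (b n)‖ ^ 2) := by
      rw [← Real.sqrt_mul hγ.le]
      exact Real.sqrt_le_sqrt q2
    calc Real.sqrt (∑' n, ‖(R * A * B * A * R - sqrtA * B * sqrtA) (b n)‖ ^ 2)
        ≤ Real.sqrt (∑' n, (‖X1 (b n)‖ + ‖X2 (b n)‖) ^ 2) := Real.sqrt_le_sqrt hstep1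
      _ ≤ Real.sqrt (∑' n, ‖X1 (b n)‖ ^ 2) + Real.sqrt (∑' n, ‖X2 (b n)‖ ^ 2) := hmink2
      _ ≤ Real.sqrt γ * Real.sqrt (∑' n, ‖(B * sqrtA) (b n)‖ ^ 2)
            + Real.sqrt γ * Real.sqrt (∑' n, ‖(sqrtA * B) (b n)‖ ^ 2) := add_le_add e1 e2
      _ = Real.sqrt γ * (Real.sqrt (∑' n, ‖(sqrtA * B) (b n)‖ ^ 2)
            + Real.sqrt (∑' n, ‖(B * sqrtA) (b n)‖ ^ 2)) := by ring
  refine ⟨key, ?_⟩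
  -- squeeze
  have hupper : Tendsto (fun γ : ℝ => Real.sqrt γ *
      (Real.sqrt (∑' n, ‖(sqrtA * B) (b n)‖ ^ 2) +
        Real.sqrt (∑' n, ‖(B * sqrtA) (b n)‖ ^ 2))) (𝓝[>] (0:ℝ)) (𝓝 0) := by
    have hsq0 : Tendsto Real.sqrt (𝓝 0) (𝓝 0) := by
      have := Real.continuous_sqrt.tendsto 0
      simpa using this
    have h8 := (hsq0.mono_left (nhdsWithin_le_nhds (s := Set.Ioi (0:ℝ)))).mul_const
      (Real.sqrt (∑' n, ‖(sqrtA * B) (b n)‖ ^ 2) +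
        Real.sqrt (∑' n, ‖(B * sqrtA) (b n)‖ ^ 2))
    simpa using h8
  apply tendsto_of_tendsto_of_tendsto_of_le_of_le' tendsto_const_nhds hupper
  · exact Eventually.of_forall fun γ => Real.sqrt_nonneg _
  · filter_upwards [self_mem_nhdsWithin] with γ hγ
    exact key γ hγ
end
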